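/- Let φ ∈ [0,1) and let f : ℕ → ℝ be such that Δf(n) → ψ ∈ ℝ as n → ∞. If ψ + φ ∈ ℤ and yₙ = e(f(n)) for n ≥ 1, then every solution of the difference equation x_{n+1} = e(−φ)·xₙ + yₙ (n ≥ 1) is unbounded, i.e. {e(f(n))}_{n≥1} ∉ 𝕎_φ. -/

import Mathlib

open Filter

/-- `e(x) = e^{2πix}`. -/
noncomputable def e (x : ℝ) : ℂ := Complex.exp (2 * Real.pi * Complex.I * x)

/-- `𝕎_φ`: the set of sequences `{yₙ}` such that every solution of
`x_{n+1} = e(−φ)xₙ + yₙ` (n ≥ 1) is bounded. -/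
def memW (φ : ℝ) (y : ℕ → ℂ) : Prop :=
  ∀ x : ℕ → ℂ, (∀ n, 1 ≤ n → x (n + 1) = e (-φ) * x n + y n) →
    ∃ C : ℝ, ∀ n, 1 ≤ n → ‖x n‖ ≤ C

/-!
The solution with `x₁ = 0` is `x_n = e(-nφ) ∑_{1 ≤ k < n} z_k` with `z_k = e((k+1)φ) e(f k)`.
These `z_k` are unit vectors with `z_{k+1} / z_k = e(φ + Δf(k)) → e(φ + ψ) = 1`, so far out a
block of `L` consecutive `z_k` stays within `1/2` of its first term. Its sum then has length at
least `L/2`, whereas bounded solutions would bound every block sum by `2C`.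
-/

open Topology Finset RealInnerProductSpace

section UnitVectors

variable {E : Type*} [NormedAddCommGroup E] [InnerProductSpace ℝ E]

lemma one_sub_norm_sub_le_inner {u : E} (hu : ‖u‖ = 1) (v : E) : 1 - ‖v - u‖ ≤ ⟪v, u⟫ := by
  have hvu : -‖v - u‖ ≤ ⟪v - u, u⟫ := by
    simpa [hu] using neg_le_of_abs_le (abs_real_inner_le_norm (v - u) u)
  have huu : ⟪u, u⟫ = 1 := by rw [real_inner_self_eq_norm_sq, hu, one_pow]
  rw [inner_sub_left, huu] at hvu
  linarith

lemma eventually_le_norm_sum_Ico {z : ℕ → E} (hz : ∀ k, ‖z k‖ = 1)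
    (hd : Tendsto (fun k => z (k + 1) - z k) atTop (𝓝 0)) (L : ℕ) :
    ∀ᶠ M in atTop, (L : ℝ) / 2 ≤ ‖∑ k ∈ Ico M (M + L), z k‖ := by
  set δ : ℝ := 1 / (2 * (L + 1))
  have hδ : 0 < δ := by positivity
  have hLδ : L * δ ≤ 1 / 2 := by
    simp only [δ]
    rw [mul_one_div, div_le_div_iff₀ (by positivity) (by positivity)]
    linarith
  obtain ⟨N, hN⟩ := eventually_atTop.1 <|
    (tendsto_zero_iff_norm_tendsto_zero.1 hd).eventually (ge_mem_nhds hδ)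
  filter_upwards [eventually_ge_atTop N] with M hM
  have hnear : ∀ k ∈ Ico M (M + L), 1 / 2 ≤ ⟪z k, z M⟫ := by
    intro k hk
    obtain ⟨hMk, hkL⟩ := mem_Ico.1 hk
    have hdist : ‖z k - z M‖ ≤ 1 / 2 := by
      calc ‖z k - z M‖ = dist (z M) (z k) := by rw [dist_comm, dist_eq_norm]
        _ ≤ ∑ _i ∈ Ico M k, δ :=
          dist_le_Ico_sum_of_dist_le hMk fun hMi _ => by
            rw [dist_comm, dist_eq_norm]; exact hN _ (hM.trans hMi)
        _ = (k - M : ℕ) * δ := by rw [sum_const, Nat.card_Ico, nsmul_eq_mul]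
        _ ≤ L * δ := by gcongr; omega
        _ ≤ 1 / 2 := hLδ
    linarith [one_sub_norm_sub_le_inner (hz M) (z k)]
  calc (L : ℝ) / 2 = ∑ _k ∈ Ico M (M + L), (1 / 2 : ℝ) := by
        rw [sum_const, Nat.card_Ico, Nat.add_sub_cancel_left, nsmul_eq_mul]; ring
    _ ≤ ∑ k ∈ Ico M (M + L), ⟪z k, z M⟫ := sum_le_sum hnear
    _ = ⟪∑ k ∈ Ico M (M + L), z k, z M⟫ := (sum_inner _ _ _).symm
    _ ≤ ‖∑ k ∈ Ico M (M + L), z k‖ := by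
        simpa [hz M] using real_inner_le_norm (∑ k ∈ Ico M (M + L), z k) (z M)

lemma exists_lt_norm_sum_Ico {z : ℕ → E} (hz : ∀ k, ‖z k‖ = 1)
    (hd : Tendsto (fun k => z (k + 1) - z k) atTop (𝓝 0)) (C : ℝ) (N : ℕ) :
    ∃ n, N ≤ n ∧ C < ‖∑ k ∈ Ico N n, z k‖ := by
  by_contra! hC
  obtain ⟨L, hL⟩ := exists_nat_gt (4 * C)
  obtain ⟨M, hNM, hM⟩ :=
    ((eventually_ge_atTop N).and (eventually_le_norm_sum_Ico hz hd L)).exists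
  have hwindow : ∑ k ∈ Ico M (M + L), z k
      = ∑ k ∈ Ico N (M + L), z k - ∑ k ∈ Ico N M, z k := by
    rw [← sum_Ico_consecutive z hNM (Nat.le_add_right M L), add_sub_cancel_left]
  rw [hwindow] at hM
  have := norm_sub_le (∑ k ∈ Ico N (M + L), z k) (∑ k ∈ Ico N M, z k)
  linarith [hC _ (hNM.trans (Nat.le_add_right M L)), hC M hNM]

end UnitVectors

lemma e_add (a b : ℝ) : e (a + b) = e a * e b := by
  simp only [e, ← Complex.exp_add]
  push_cast
  ring_nf

lemma norm_e (x : ℝ) : ‖e x‖ = 1 := by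
  rw [e, show 2 * Real.pi * Complex.I * x = ((2 * Real.pi * x : ℝ) : ℂ) * Complex.I by
    push_cast; ring]
  exact Complex.norm_exp_ofReal_mul_I _

lemma e_intCast (m : ℤ) : e m = 1 := by
  rw [e, show 2 * Real.pi * Complex.I * ((m : ℝ) : ℂ) = m * (2 * Real.pi * Complex.I) by
    push_cast; ring]
  exact Complex.exp_int_mul_two_pi_mul_I m

lemma continuous_e : Continuous e := by
  unfold e
  fun_prop

-- The solution of `x_{n+1} = e(-φ) x_n + y_n` with `x₁ = 0`.
noncomputable def variationOfConstants (φ : ℝ) (y : ℕ → ℂ) (n : ℕ) : ℂ :=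
  e (-(n * φ)) * ∑ k ∈ Ico 1 n, e ((k + 1) * φ) * y k

lemma variationOfConstants_succ (φ : ℝ) (y : ℕ → ℂ) {n : ℕ} (hn : 1 ≤ n) :
    variationOfConstants φ y (n + 1) = e (-φ) * variationOfConstants φ y n + y n := by
  have hcancel : e (-((n + 1 : ℕ) * φ)) * e ((n + 1) * φ) = 1 := by
    rw [← e_add, show -((n + 1 : ℕ) * φ) + (n + 1) * φ = ((0 : ℤ) : ℝ) by push_cast; ring,
      e_intCast]
  have hshift : e (-((n + 1 : ℕ) * φ)) = e (-φ) * e (-(n * φ)) := by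
    rw [← e_add]; push_cast; ring_nf
  rw [variationOfConstants, sum_Ico_succ_top hn, mul_add, ← mul_assoc, hcancel, one_mul,
    hshift, mul_assoc, variationOfConstants]

lemma norm_variationOfConstants (φ : ℝ) (y : ℕ → ℂ) (n : ℕ) :
    ‖variationOfConstants φ y n‖ = ‖∑ k ∈ Ico 1 n, e ((k + 1) * φ) * y k‖ := by
  rw [variationOfConstants, norm_mul, norm_e, one_mul]

lemma tendsto_e_mul_e_succ_sub {φ ψ : ℝ} {f : ℕ → ℝ}
    (hψ : Tendsto (fun n : ℕ => f (n + 1) - f n) atTop (𝓝 ψ)) (hint : ∃ m : ℤ, ψ + φ = m) :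
    Tendsto (fun k : ℕ =>
      e ((((k + 1 : ℕ) : ℝ) + 1) * φ) * e (f (k + 1)) - e ((k + 1) * φ) * e (f k)) atTop (𝓝 0) := by
  obtain ⟨m, hm⟩ := hint
  have hstep : ∀ k : ℕ,
      e ((((k + 1 : ℕ) : ℝ) + 1) * φ) * e (f (k + 1)) - e ((k + 1) * φ) * e (f k)
        = e ((k + 1) * φ) * e (f k) * (e (φ + (f (k + 1) - f k)) - 1) := by
    intro k
    simp only [mul_sub, mul_one, ← e_add]
    congr 2
    push_cast
    ring
  have hlim : Tendsto (fun k : ℕ => e (φ + (f (k + 1) - f k)) - 1) atTop (𝓝 0) := by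
    have := ((continuous_e.tendsto _).comp (hψ.const_add φ)).sub_const 1
    rwa [show φ + ψ = m by linarith, e_intCast, sub_self] at this
  rw [tendsto_zero_iff_norm_tendsto_zero] at hlim ⊢
  simpa only [hstep, norm_mul, norm_e, one_mul] using hlim

theorem stmt_13_general (φ : ℝ) (f : ℕ → ℝ)
    (ψ : ℝ) (hψ : Tendsto (fun n : ℕ => f (n + 1) - f n) atTop (nhds ψ))
    (hint : ∃ m : ℤ, ψ + φ = (m : ℝ)) :
    ¬ memW φ (fun n => e (f n)) := by
  intro hW
  obtain ⟨C, hC⟩ := hW (variationOfConstants φ fun n => e (f n))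
    fun n hn => variationOfConstants_succ φ _ hn
  obtain ⟨n, hn, hCn⟩ := exists_lt_norm_sum_Ico (z := fun k : ℕ => e ((k + 1) * φ) * e (f k))
    (fun k => by rw [norm_mul, norm_e, norm_e, one_mul]) (tendsto_e_mul_e_succ_sub hψ hint) C 1
  exact hCn.not_ge ((norm_variationOfConstants φ _ n).symm.trans_le (hC n hn))

/-- if `Δf(n) → ψ` and `ψ + φ ∈ ℤ`, then `{e(f(n))}_{n≥1} ∉ 𝕎_φ`. -/
theorem stmt_13 (φ : ℝ) (hφ0 : 0 ≤ φ) (hφ1 : φ < 1) (f : ℕ → ℝ)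
    (ψ : ℝ) (hψ : Tendsto (fun n : ℕ => f (n + 1) - f n) atTop (nhds ψ))
    (hint : ∃ m : ℤ, ψ + φ = (m : ℝ)) :
    ¬ memW φ (fun n => e (f n)) :=
  stmt_13_general φ f ψ hψ hint
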